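/- Let 𝒪 be an infinite order ideal in P = K[x_0,…,x_n], let G be a homogeneous ∂𝒪-prebasis, and let d_0 ≥ 2. The following are equivalent: (i) for every 0 ≤ d ≤ d_0, the residue classes of the terms of 𝒪_d form a K-vector space basis of P_d/(G)_d; (ii) for every 0 ≤ d ≤ d_0 − 2 and all r, s ∈ {0,…,n}, the graded formal multiplication matrices of G satisfy Χ_r^{(d+1)}·Χ_s^{(d)} = Χ_s^{(d+1)}·Χ_r^{(d)}. In that case, for every 0 ≤ d ≤ d_0 − 1, the matrix Χ_r^{(d)} represents the multiplication-by-x_r homomorphism P_d/(G)_d → P_{d+1}/(G)_{d+1} with respect to the bases given by the residue classes of 𝒪_d and 𝒪_{d+1}. -/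

import Mathlib

open MvPolynomial

namespace Border

/-- A term of `K[x_0, …, x_n]`, identified with its exponent vector. -/
abbrev Term (n : ℕ) := Fin (n + 1) →₀ ℕ

variable {n : ℕ}

/-- The (standard) degree of a term. -/
def tdeg (m : Term n) : ℕ := ∑ i, m i

/-- An order ideal: a nonempty set of terms closed under divisors. -/
def IsOrderIdeal (O : Set (Term n)) : Prop :=
  O.Nonempty ∧ ∀ τ ∈ O, ∀ τ' : Term n, τ' ≤ τ → τ' ∈ O

/-- The border `∂𝒪 = (x_0·𝒪 ∪ ⋯ ∪ x_n·𝒪) ∖ 𝒪`. -/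
def border (O : Set (Term n)) : Set (Term n) :=
  {σ | σ ∉ O ∧ ∃ r : Fin (n + 1), ∃ τ ∈ O, σ = τ + Finsupp.single r 1}

/-- Multiplicative set of a border term `σ`, with respect to a labeling `lab` of the border:
`𝒯_σ = {η : σ' ∤ η·σ for every border term σ' with a larger label}`. -/
def mulSet (O : Set (Term n)) (lab : Term n → ℕ) (σ : Term n) : Set (Term n) :=
  {η | ∀ σ' ∈ border O, lab σ < lab σ' → ¬ σ' ≤ η + σ}

/-- The cone `C(σ) = {η·σ : η ∈ 𝒯_σ}`. -/
def cone (O : Set (Term n)) (lab : Term n → ℕ) (σ : Term n) : Set (Term n) :=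
  (fun η => η + σ) '' mulSet O lab σ

/-- A labeling of the border which is injective and ordered increasingly by degree. -/
def DegOrderedLabeling (O : Set (Term n)) (lab : Term n → ℕ) : Prop :=
  Set.InjOn lab (border O) ∧
    ∀ σ ∈ border O, ∀ σ' ∈ border O, lab σ < lab σ' → tdeg σ ≤ tdeg σ'

/-- Iterated border closures: `∂⁰𝒪 := 𝒪`, and the `(k+1)`-st closure adds the border. -/
def borderClosure (O : Set (Term n)) : ℕ → Set (Term n)
  | 0 => O
  | k + 1 => borderClosure O k ∪ border (borderClosure O k)

/-- The index `ind_𝒪(τ)`: the least `k` with `τ ∈ ∂^k𝒪`. -/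
noncomputable def ind (O : Set (Term n)) (τ : Term n) : ℕ :=
  sInf {k | τ ∈ borderClosure O k}

/-- Degree-`d` part of a set of terms. -/
def Od (O : Set (Term n)) (d : ℕ) : Set (Term n) := {τ | τ ∈ O ∧ tdeg τ = d}

variable {K : Type*} [Field K]

/-- The index of a nonzero polynomial: the maximal index of a term of its support. -/
noncomputable def indP (O : Set (Term n)) (f : MvPolynomial (Fin (n + 1)) K) : ℕ :=
  f.support.sup (ind O)

/-- A homogeneous `∂𝒪`-prebasis: a family `g σ = σ - Σ_{τ ∈ 𝒪_{deg σ}} c_{στ} τ`. -/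
def IsPrebasis (O : Set (Term n)) (g : Term n → MvPolynomial (Fin (n + 1)) K) : Prop :=
  ∀ σ ∈ border O, ∀ τ ∈ (monomial σ (1 : K) - g σ).support, τ ∈ O ∧ tdeg τ = tdeg σ

/-- The set of border reductors `𝒯G = {η·g_σ : σ ∈ ∂𝒪, η ∈ 𝒯_σ}`. -/
def reductors (O : Set (Term n)) (lab : Term n → ℕ)
    (g : Term n → MvPolynomial (Fin (n + 1)) K) : Set (MvPolynomial (Fin (n + 1)) K) :=
  {p | ∃ σ ∈ border O, ∃ η ∈ mulSet O lab σ, p = monomial η (1 : K) * g σ}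

/-- The degree-`d` border reductors `𝒯G_d = 𝒯G ∩ P_d`. -/
def reductorsDeg (O : Set (Term n)) (lab : Term n → ℕ)
    (g : Term n → MvPolynomial (Fin (n + 1)) K) (d : ℕ) :
    Set (MvPolynomial (Fin (n + 1)) K) :=
  reductors O lab g ∩ {p | p.IsHomogeneous d}

/-- One step of the border reduction relation `→_G`. -/
def Step (O : Set (Term n)) (lab : Term n → ℕ)
    (g : Term n → MvPolynomial (Fin (n + 1)) K)
    (f h : MvPolynomial (Fin (n + 1)) K) : Prop :=
  ∃ σ ∈ border O, ∃ η ∈ mulSet O lab σ, η + σ ∈ f.support ∧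
    h = f - f.coeff (η + σ) • (monomial η (1 : K) * g σ)

/-- The border reduction relation `→⁺_G` (finitely many, possibly zero, steps). -/
def Reduces (O : Set (Term n)) (lab : Term n → ℕ)
    (g : Term n → MvPolynomial (Fin (n + 1)) K) :
    MvPolynomial (Fin (n + 1)) K → MvPolynomial (Fin (n + 1)) K → Prop :=
  Relation.ReflTransGen (Step O lab g)

/-- The `K`-vector space spanned by a set of terms. -/
noncomputable def spanTerms (K : Type*) [Field K] (S : Set (Term n)) :
    Submodule K (MvPolynomial (Fin (n + 1)) K) :=
  Submodule.span K ((fun τ => monomial τ (1 : K)) '' S)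

/-- The ideal `(G)` generated by a `∂𝒪`-prebasis. -/
noncomputable def idealG (O : Set (Term n)) (g : Term n → MvPolynomial (Fin (n + 1)) K) :
    Ideal (MvPolynomial (Fin (n + 1)) K) :=
  Ideal.span (g '' border O)

/-- The degree-`d` part `I_d` of an ideal, as a `K`-vector subspace. -/
noncomputable def degPart (I : Ideal (MvPolynomial (Fin (n + 1)) K)) (d : ℕ) :
    Submodule K (MvPolynomial (Fin (n + 1)) K) :=
  Submodule.restrictScalars K I ⊓ homogeneousSubmodule (Fin (n + 1)) K d

/-- Homogeneous ideal. -/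
def IsHomogeneousIdeal (I : Ideal (MvPolynomial (Fin (n + 1)) K)) : Prop :=
  ∀ f ∈ I, ∀ d : ℕ, homogeneousComponent d f ∈ I

/-- `G` is a homogeneous `∂𝒪`-basis of `J`: it is a prebasis contained in `J` and for every
`d` one has `P_d = J_d ⊕ ⟨𝒪_d⟩`, i.e. the residue classes of `𝒪_d` are a basis of `P_d/J_d`. -/
def IsBorderBasisOf (O : Set (Term n)) (g : Term n → MvPolynomial (Fin (n + 1)) K)
    (J : Ideal (MvPolynomial (Fin (n + 1)) K)) : Prop :=
  IsPrebasis O g ∧ (∀ σ ∈ border O, g σ ∈ J) ∧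
    ∀ d : ℕ, degPart J d ⊔ spanTerms K (Od O d) = homogeneousSubmodule (Fin (n + 1)) K d ∧
      Disjoint (degPart J d) (spanTerms K (Od O d))

/-- An `m`-lower representation of `f` by `𝒯G`: `f = Σ c_j • η_j·g_{σ_j}` with distinct
pairs `(η_j, σ_j)`, `η_j ∈ 𝒯_{σ_j}` and `ind(η_j σ_j) ≤ m`. -/
def HasLRep (O : Set (Term n)) (lab : Term n → ℕ)
    (g : Term n → MvPolynomial (Fin (n + 1)) K)
    (f : MvPolynomial (Fin (n + 1)) K) (m : ℕ) : Prop :=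
  ∃ (s : Finset (Term n × Term n)) (c : Term n × Term n → K),
    (∀ p ∈ s, p.2 ∈ border O ∧ p.1 ∈ mulSet O lab p.2 ∧ ind O (p.1 + p.2) ≤ m) ∧
    f = ∑ p ∈ s, c p • (monomial p.1 (1 : K) * g p.2)

/-- An `m`-lower representation of `f` by `𝒯G_d`. -/
def HasLRepDeg (O : Set (Term n)) (lab : Term n → ℕ)
    (g : Term n → MvPolynomial (Fin (n + 1)) K)
    (f : MvPolynomial (Fin (n + 1)) K) (m d : ℕ) : Prop :=
  ∃ (s : Finset (Term n × Term n)) (c : Term n × Term n → K),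
    (∀ p ∈ s, p.2 ∈ border O ∧ p.1 ∈ mulSet O lab p.2 ∧ ind O (p.1 + p.2) ≤ m ∧
      (monomial p.1 (1 : K) * g p.2).IsHomogeneous d) ∧
    f = ∑ p ∈ s, c p • (monomial p.1 (1 : K) * g p.2)

/-- The subtype of terms of `𝒪` of degree `d`. -/
abbrev OdSub (O : Set (Term n)) (d : ℕ) : Type _ := {τ : Term n // τ ∈ Od O d}

lemma tdeg_component_lt {d : ℕ} (m : Term n) (h : tdeg m = d) (i : Fin (n + 1)) :
    m i < d + 1 := by
  have : m i ≤ tdeg m :=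
    Finset.single_le_sum (f := fun j => m j) (fun j _ => Nat.zero_le _) (Finset.mem_univ i)
  omega

instance (O : Set (Term n)) (d : ℕ) : Finite (OdSub O d) := by
  have hinj : Function.Injective
      (fun τ : OdSub O d => fun i : Fin (n + 1) =>
        (⟨τ.1 i, tdeg_component_lt τ.1 τ.2.2 i⟩ : Fin (d + 1))) := by
    intro a b hab
    apply Subtype.ext
    apply Finsupp.ext
    intro i
    simpa using congrArg Fin.val (congrFun hab i)
  exact Finite.of_injective _ hinj

noncomputable instance (O : Set (Term n)) (d : ℕ) : Fintype (OdSub O d) :=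
  Fintype.ofFinite _

open scoped Classical in
/-- The `r`-th `d`-graded formal multiplication matrix of a prebasis `G`,
with rows indexed by `𝒪_{d+1}` and columns by `𝒪_d`. -/
noncomputable def multMatrix (O : Set (Term n))
    (g : Term n → MvPolynomial (Fin (n + 1)) K) (r : Fin (n + 1)) (d : ℕ) :
    Matrix (OdSub O (d + 1)) (OdSub O d) K :=
  Matrix.of fun τ' τ =>
    if τ.1 + Finsupp.single r 1 ∈ O then
      (if τ.1 + Finsupp.single r 1 = τ'.1 then 1 else 0)
    else (monomial (τ.1 + Finsupp.single r 1) (1 : K)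
            - g (τ.1 + Finsupp.single r 1)).coeff τ'.1

/-- The minimum degree of a border term. -/
noncomputable def minDegBorder (O : Set (Term n)) : ℕ := sInf (tdeg '' border O)

/-- The `d`-th Macaulay transformation `a^{⟨d⟩}`, computed greedily. -/
noncomputable def macaulay : ℕ → ℕ → ℕ
  | 0, _ => 0
  | d + 1, a =>
    if a = 0 then 0
    else
      Nat.choose (sSup {k | Nat.choose k (d + 1) ≤ a} + 1) (d + 2) +
        macaulay d (a - Nat.choose (sSup {k | Nat.choose k (d + 1) ≤ a}) (d + 1))

/-- An ideal is generated in degrees `≤ m` if it is generated by its homogeneous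
elements of degree `≤ m`. -/
def GeneratedInDegLE (I : Ideal (MvPolynomial (Fin (n + 1)) K)) (m : ℕ) : Prop :=
  I = Ideal.span {f | f ∈ I ∧ ∃ d ≤ m, f.IsHomogeneous d}

/-!
The spanning half `P_d = (G)_d + ⟨𝒪_d⟩` holds for every prebasis: by induction on `d`, since the
`τ`-th column of `Χ_r^{(d)}` is congruent to `x_r·τ` modulo `(G)`. Applying this congruence twice,
`x_r x_s·τ` is congruent both to the column of `Χ_r^{(d+1)} Χ_s^{(d)}` and to that of
`Χ_s^{(d+1)} Χ_r^{(d)}`; their difference lies in `(G)_{d+2} ∩ ⟨𝒪_{d+2}⟩`, so (i) gives (ii).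

Conversely, if the matrices commute, send a term of degree `D ≤ d₀` to the vector obtained by
applying to `e_1` the matrices of its variables, one variable at a time. Commutativity makes this
independent of the order of the variables, so the resulting linear map `P → K^{𝒪_D}` intertwines
`x_r` with `Χ_r`, kills every `g_σ`, and hence kills `(G)` in degrees `≤ d₀`. As it is the identity
on `⟨𝒪_D⟩`, the intersection `(G)_D ∩ ⟨𝒪_D⟩` is zero.
-/

open scoped Matrix

section TermDegree

lemma tdeg_eq_degree (m : Term n) : tdeg m = m.degree := (Finsupp.degree_eq_sum m).symm

@[simp] lemma tdeg_add (a b : Term n) : tdeg (a + b) = tdeg a + tdeg b := by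
  simp [tdeg_eq_degree]

@[simp] lemma tdeg_single_one (r : Fin (n + 1)) : tdeg (Finsupp.single r 1) = 1 := by
  simp [tdeg_eq_degree]

@[simp] lemma tdeg_zero : tdeg (0 : Term n) = 0 := by
  simp [tdeg]

lemma tdeg_eq_zero_iff {m : Term n} : tdeg m = 0 ↔ m = 0 := by
  rw [tdeg_eq_degree, Finsupp.degree_eq_zero_iff]

lemma sub_single_add_single {m : Term n} {r : Fin (n + 1)} (h : m r ≠ 0) :
    m - Finsupp.single r 1 + Finsupp.single r 1 = m :=
  tsub_add_cancel_of_le (Finsupp.single_le_iff.mpr (Nat.one_le_iff_ne_zero.mpr h))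

lemma homogeneousSubmodule_eq_restrictSupport (d : ℕ) :
    homogeneousSubmodule (Fin (n + 1)) K d = restrictSupport K {m : Term n | tdeg m = d} := by
  simp_rw [homogeneousSubmodule_eq_finsupp_supported, tdeg_eq_degree]
  rfl

lemma X_mul_monomial (r : Fin (n + 1)) (m : Term n) (c : K) :
    X r * monomial m c = monomial (m + Finsupp.single r 1) c := by
  rw [add_comm m, monomial_single_add, pow_one]

lemma _root_.MvPolynomial.IsHomogeneous.X_mul {σ R : Type*} [CommSemiring R]
    {f : MvPolynomial σ R} {d : ℕ} (hf : f.IsHomogeneous d) (r : σ) :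
    (X r * f).IsHomogeneous (d + 1) := by
  simpa [add_comm] using (isHomogeneous_X R r).mul hf

noncomputable def pivot (m : Term n) (h : m ≠ 0) : Fin (n + 1) :=
  m.support.min' (Finsupp.support_nonempty_iff.mpr h)

lemma pivot_ne_zero {m : Term n} (h : m ≠ 0) : m (pivot m h) ≠ 0 :=
  Finsupp.mem_support_iff.mp (m.support.min'_mem _)

end TermDegree

theorem _root_.MvPolynomial.restrictScalars_span_le_of_X_mul_mem {σ R : Type*} [CommSemiring R]
    {N : Submodule R (MvPolynomial σ R)} (hX : ∀ i, ∀ f ∈ N, X i * f ∈ N)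
    {s : Set (MvPolynomial σ R)} (hs : s ⊆ N) : (Ideal.span s).restrictScalars R ≤ N := by
  have hmul : ∀ p, ∀ f ∈ N, p * f ∈ N := by
    intro p
    induction p using MvPolynomial.induction_on with
    | C a => intro f hf; rw [C_mul']; exact N.smul_mem a hf
    | add p q hp hq => intro f hf; rw [add_mul]; exact N.add_mem (hp f hf) (hq f hf)
    | mul_X p i hp => intro f hf; rw [mul_assoc]; exact hp _ (hX i f hf)
  intro f hf
  rw [Submodule.restrictScalars_mem] at hf
  induction hf using Submodule.span_induction with
  | mem x hx => exact hs hx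
  | zero => exact N.zero_mem
  | add x y _ _ hx hy => exact N.add_mem hx hy
  | smul a x _ hx => exact hmul a x hx

section Coefficients

variable {O : Set (Term n)} {d : ℕ}

lemma spanTerms_eq_restrictSupport (S : Set (Term n)) : spanTerms K S = restrictSupport K S :=
  (restrictSupport_eq_span K S).symm

lemma spanTerms_Od_le (O : Set (Term n)) (d : ℕ) :
    spanTerms K (Od O d) ≤ homogeneousSubmodule (Fin (n + 1)) K d := by
  rw [spanTerms_eq_restrictSupport, homogeneousSubmodule_eq_restrictSupport]
  exact restrictSupport_mono K fun _ hτ => hτ.2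

noncomputable def ofCoeffs (O : Set (Term n)) (d : ℕ) :
    (OdSub O d → K) →ₗ[K] MvPolynomial (Fin (n + 1)) K :=
  Fintype.linearCombination K fun τ => monomial τ.1 1

lemma ofCoeffs_apply (v : OdSub O d → K) :
    ofCoeffs O d v = ∑ τ, v τ • monomial τ.1 (1 : K) :=
  rfl

lemma ofCoeffs_single (τ : OdSub O d) :
    ofCoeffs O d (Pi.single τ 1) = monomial τ.1 (1 : K) := by
  simp [ofCoeffs]

lemma range_ofCoeffs : LinearMap.range (ofCoeffs (K := K) O d) = spanTerms K (Od O d) := by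
  rw [ofCoeffs, Fintype.range_linearCombination, spanTerms, Set.image_eq_range]

lemma isHomogeneous_ofCoeffs (v : OdSub O d → K) : (ofCoeffs O d v).IsHomogeneous d :=
  spanTerms_Od_le O d (range_ofCoeffs (K := K) ▸ LinearMap.mem_range_self _ v)

lemma coeff_ofCoeffs (v : OdSub O d → K) (τ : OdSub O d) :
    coeff τ.1 (ofCoeffs O d v) = v τ := by
  classical
  rw [ofCoeffs_apply, coeff_sum, Finset.sum_eq_single τ]
  · simp
  · intro τ' _ hτ'
    simp [coeff_monomial, Subtype.val_injective.ne hτ']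
  · simp

lemma ofCoeffs_injective : Function.Injective (ofCoeffs (K := K) O d) := fun v w h =>
  funext fun τ => by rw [← coeff_ofCoeffs v τ, h, coeff_ofCoeffs]

lemma ofCoeffs_coeff {f : MvPolynomial (Fin (n + 1)) K} (hf : ↑f.support ⊆ Od O d) :
    ofCoeffs O d (fun τ => coeff τ.1 f) = f := by
  have hf' : f ∈ LinearMap.range (ofCoeffs O d) := by
    rwa [range_ofCoeffs, spanTerms_eq_restrictSupport, mem_restrictSupport_iff]
  obtain ⟨v, rfl⟩ := hf'
  simp_rw [coeff_ofCoeffs]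

end Coefficients

section FormalMultiplication

variable {O : Set (Term n)} {d : ℕ} {g : Term n → MvPolynomial (Fin (n + 1)) K}

@[simp] lemma mem_degPart {I : Ideal (MvPolynomial (Fin (n + 1)) K)} {d : ℕ}
    {f : MvPolynomial (Fin (n + 1)) K} : f ∈ degPart I d ↔ f ∈ I ∧ f.IsHomogeneous d :=
  Iff.rfl

lemma IsPrebasis.support_subset (hg : IsPrebasis O g) {σ : Term n} (hσ : σ ∈ border O) :
    ↑(monomial σ 1 - g σ).support ⊆ Od O (tdeg σ) :=
  fun τ hτ => hg σ hσ τ hτ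

lemma IsPrebasis.isHomogeneous (hg : IsPrebasis O g) {σ : Term n} (hσ : σ ∈ border O) :
    (g σ).IsHomogeneous (tdeg σ) := by
  have hrest : (monomial σ 1 - g σ).IsHomogeneous (tdeg σ) :=
    spanTerms_Od_le O _ <| (spanTerms_eq_restrictSupport (K := K) _).symm ▸ hg.support_subset hσ
  simpa using (isHomogeneous_monomial (1 : K) (tdeg_eq_degree σ).symm).sub hrest

lemma ofCoeffs_col_of_mem (r : Fin (n + 1)) (τ : OdSub O d)
    (h : τ.1 + Finsupp.single r 1 ∈ O) :
    ofCoeffs O (d + 1) (fun τ' => multMatrix O g r d τ' τ)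
      = monomial (τ.1 + Finsupp.single r 1) 1 := by
  classical
  rw [← ofCoeffs_coeff (f := monomial (τ.1 + Finsupp.single r 1) (1 : K))]
  · congr; funext τ'; simp [multMatrix, h, coeff_monomial]
  · rw [support_monomial, if_neg one_ne_zero, Finset.coe_singleton, Set.singleton_subset_iff]
    exact ⟨h, by simp [τ.2.2]⟩

lemma ofCoeffs_col_of_notMem (hg : IsPrebasis O g) (r : Fin (n + 1)) (τ : OdSub O d)
    (h : τ.1 + Finsupp.single r 1 ∉ O) :
    ofCoeffs O (d + 1) (fun τ' => multMatrix O g r d τ' τ)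
      = monomial (τ.1 + Finsupp.single r 1) 1 - g (τ.1 + Finsupp.single r 1) := by
  have hb : τ.1 + Finsupp.single r 1 ∈ border O := ⟨h, r, τ.1, τ.2.1, rfl⟩
  have hσ : tdeg (τ.1 + Finsupp.single r 1) = d + 1 := by simp [τ.2.2]
  have hsupp := hg.support_subset hb
  rw [hσ] at hsupp
  rw [← ofCoeffs_coeff hsupp]
  congr; funext τ'; simp [multMatrix, h]

lemma monomial_sub_ofCoeffs_col_mem (hg : IsPrebasis O g) (r : Fin (n + 1)) (τ : OdSub O d) :
    monomial (τ.1 + Finsupp.single r 1) 1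
        - ofCoeffs O (d + 1) (fun τ' => multMatrix O g r d τ' τ) ∈ idealG O g := by
  by_cases h : τ.1 + Finsupp.single r 1 ∈ O
  · rw [ofCoeffs_col_of_mem r τ h, sub_self]
    exact zero_mem _
  · rw [ofCoeffs_col_of_notMem hg r τ h, sub_sub_cancel]
    exact Ideal.subset_span ⟨_, ⟨h, r, τ.1, τ.2.1, rfl⟩, rfl⟩

lemma multMatrix_mulVec_single_of_mem (r : Fin (n + 1)) (τ : OdSub O d) (σ : OdSub O (d + 1))
    (h : τ.1 + Finsupp.single r 1 = σ.1) :
    multMatrix O g r d *ᵥ Pi.single τ 1 = Pi.single σ 1 :=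
  ofCoeffs_injective <| by
    rw [Matrix.mulVec_single_one, ofCoeffs_single, ← h]
    exact ofCoeffs_col_of_mem r τ (h ▸ σ.2.1)

lemma X_mul_ofCoeffs_sub_mem (hg : IsPrebasis O g) (r : Fin (n + 1)) (v : OdSub O d → K) :
    X r * ofCoeffs O d v - ofCoeffs O (d + 1) (multMatrix O g r d *ᵥ v) ∈ idealG O g := by
  classical
  rw [← Finset.univ_sum_single v]
  simp only [map_sum, Matrix.mulVec_sum, Finset.mul_sum, ← Finset.sum_sub_distrib]
  refine Ideal.sum_mem _ fun τ _ => ?_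
  have hτ : Pi.single τ (v τ) = v τ • Pi.single τ (1 : K) := by
    rw [← Pi.single_smul', smul_eq_mul, mul_one]
  rw [hτ, map_smul, Matrix.mulVec_smul, map_smul, mul_smul_comm, ← smul_sub, ofCoeffs_single,
    X_mul_monomial, Matrix.mulVec_single_one]
  exact Submodule.smul_of_tower_mem _ _ (monomial_sub_ofCoeffs_col_mem hg r τ)

lemma X_mul_X_mul_ofCoeffs_sub_mem (hg : IsPrebasis O g) (r s : Fin (n + 1))
    (v : OdSub O d → K) :
    X r * (X s * ofCoeffs O d v)
        - ofCoeffs O (d + 1 + 1) ((multMatrix O g r (d + 1) * multMatrix O g s d) *ᵥ v)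
      ∈ idealG O g := by
  have h := Ideal.add_mem _ (Ideal.mul_mem_left _ (X r) (X_mul_ofCoeffs_sub_mem hg s v))
    (X_mul_ofCoeffs_sub_mem hg r (multMatrix O g s d *ᵥ v))
  rw [← Matrix.mulVec_mulVec]
  convert h using 1
  ring

end FormalMultiplication

section BasisCondition

variable {O : Set (Term n)} {d : ℕ} {g : Term n → MvPolynomial (Fin (n + 1)) K}

theorem multMatrix_comm_of_disjoint (hg : IsPrebasis O g)
    (hdisj : Disjoint (degPart (idealG O g) (d + 1 + 1)) (spanTerms K (Od O (d + 1 + 1))))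
    (r s : Fin (n + 1)) :
    multMatrix O g r (d + 1) * multMatrix O g s d
      = multMatrix O g s (d + 1) * multMatrix O g r d := by
  refine Matrix.ext_iff_mulVec.mpr fun v => ofCoeffs_injective (sub_eq_zero.mp ?_)
  set f := ofCoeffs O (d + 1 + 1) ((multMatrix O g r (d + 1) * multMatrix O g s d) *ᵥ v)
    - ofCoeffs O (d + 1 + 1) ((multMatrix O g s (d + 1) * multMatrix O g r d) *ᵥ v)
  have hI : f ∈ idealG O g := by
    convert Ideal.sub_mem _ (X_mul_X_mul_ofCoeffs_sub_mem hg s r v)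
      (X_mul_X_mul_ofCoeffs_sub_mem hg r s v) using 1
    ring
  have hspan : f ∈ spanTerms K (Od O (d + 1 + 1)) := by
    rw [← range_ofCoeffs]
    exact ⟨_, map_sub _ _ _⟩
  exact Submodule.disjoint_def.mp hdisj f ⟨hI, spanTerms_Od_le O _ hspan⟩ hspan

lemma X_mul_mem_degPart_sup (hg : IsPrebasis O g) (r : Fin (n + 1))
    {f : MvPolynomial (Fin (n + 1)) K}
    (hf : f ∈ degPart (idealG O g) d ⊔ spanTerms K (Od O d)) :
    X r * f ∈ degPart (idealG O g) (d + 1) ⊔ spanTerms K (Od O (d + 1)) := by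
  obtain ⟨a, ha, b, hb, rfl⟩ := Submodule.mem_sup.mp hf
  rw [← range_ofCoeffs] at hb
  obtain ⟨v, rfl⟩ := hb
  set b' := ofCoeffs O (d + 1) (multMatrix O g r d *ᵥ v)
  have hhom : (X r * ofCoeffs O d v - b').IsHomogeneous (d + 1) :=
    ((isHomogeneous_ofCoeffs v).X_mul r).sub (isHomogeneous_ofCoeffs _)
  refine Submodule.mem_sup.mpr ⟨X r * a + (X r * ofCoeffs O d v - b'), ?_, b', ?_, by ring⟩
  · rw [mem_degPart] at ha ⊢
    exact ⟨Ideal.add_mem _ (Ideal.mul_mem_left _ _ ha.1) (X_mul_ofCoeffs_sub_mem hg r v),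
      (ha.2.X_mul r).add hhom⟩
  · rw [← range_ofCoeffs]
    exact LinearMap.mem_range_self _ _

lemma monomial_mem_degPart_sup (hO : IsOrderIdeal O) (hg : IsPrebasis O g) (m : Term n) :
    monomial m (1 : K) ∈ degPart (idealG O g) (tdeg m) ⊔ spanTerms K (Od O (tdeg m)) := by
  induction hm : tdeg m generalizing m with
  | zero =>
    obtain rfl := tdeg_eq_zero_iff.mp hm
    obtain ⟨τ, hτ⟩ := hO.1
    exact Submodule.mem_sup_right
      (Submodule.subset_span ⟨0, ⟨hO.2 τ hτ 0 zero_le, hm⟩, rfl⟩)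
  | succ d ih =>
    have hm0 : m ≠ 0 := by rintro rfl; simp at hm
    obtain ⟨r, hr⟩ := Finsupp.ne_iff.mp hm0
    rw [← sub_single_add_single hr, ← X_mul_monomial]
    refine X_mul_mem_degPart_sup hg r (ih _ ?_)
    rw [← sub_single_add_single hr, tdeg_add, tdeg_single_one] at hm
    omega

theorem degPart_sup_spanTerms (hO : IsOrderIdeal O) (hg : IsPrebasis O g) (d : ℕ) :
    degPart (idealG O g) d ⊔ spanTerms K (Od O d) = homogeneousSubmodule (Fin (n + 1)) K d := by
  refine le_antisymm (sup_le inf_le_right (spanTerms_Od_le O d)) ?_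
  rw [homogeneousSubmodule_eq_restrictSupport, restrictSupport_eq_span, Submodule.span_le]
  rintro _ ⟨m, rfl : tdeg m = d, rfl⟩
  exact monomial_mem_degPart_sup hO hg m

end BasisCondition

def MultMatricesCommute (O : Set (Term n)) (g : Term n → MvPolynomial (Fin (n + 1)) K)
    (d₀ : ℕ) : Prop :=
  ∀ d, d + 2 ≤ d₀ → ∀ r s : Fin (n + 1),
    multMatrix O g r (d + 1) * multMatrix O g s d = multMatrix O g s (d + 1) * multMatrix O g r d

section Coordinates

variable {O : Set (Term n)} {g : Term n → MvPolynomial (Fin (n + 1)) K} {d₀ : ℕ}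

open scoped Classical in
/-- The value is `0` when `deg m ≠ D`, so that `coordMap O g D` only sees the degree-`D`
component of a polynomial. -/
noncomputable def coordVec (O : Set (Term n)) (g : Term n → MvPolynomial (Fin (n + 1)) K) :
    (D : ℕ) → Term n → OdSub O D → K
  | 0, m => if h : m ∈ Od O 0 then Pi.single ⟨m, h⟩ 1 else 0
  | D + 1, m =>
      if h : m = 0 then 0
      else multMatrix O g (pivot m h) D *ᵥ coordVec O g D (m - Finsupp.single (pivot m h) 1)

noncomputable def coordMap (O : Set (Term n)) (g : Term n → MvPolynomial (Fin (n + 1)) K)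
    (D : ℕ) : MvPolynomial (Fin (n + 1)) K →ₗ[K] (OdSub O D → K) :=
  (basisMonomials (Fin (n + 1)) K).constr K (coordVec O g D)

lemma coordMap_monomial (D : ℕ) (m : Term n) (c : K) :
    coordMap O g D (monomial m c) = c • coordVec O g D m := by
  have hm : monomial m c = c • basisMonomials (Fin (n + 1)) K m := by
    rw [coe_basisMonomials, smul_monomial, smul_eq_mul, mul_one]
  rw [hm, map_smul, coordMap, Module.Basis.constr_basis]

lemma coordVec_succ {m : Term n} (h : m ≠ 0) (D : ℕ) :
    coordVec O g (D + 1) m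
      = multMatrix O g (pivot m h) D *ᵥ coordVec O g D (m - Finsupp.single (pivot m h) 1) := by
  rw [coordVec, dif_neg h]

lemma coordVec_of_tdeg_ne {D : ℕ} {m : Term n} (hm : tdeg m ≠ D) : coordVec O g D m = 0 := by
  induction D generalizing m with
  | zero => exact dif_neg fun h => hm h.2
  | succ D ih =>
    by_cases h : m = 0
    · rw [coordVec, dif_pos h]
    · rw [coordVec_succ h, ih, Matrix.mulVec_zero]
      rw [← sub_single_add_single (pivot_ne_zero h), tdeg_add, tdeg_single_one] at hm
      omega

lemma coordVec_of_mem (hO : IsOrderIdeal O) {D : ℕ} (τ : OdSub O D) :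
    coordVec O g D τ.1 = Pi.single τ 1 := by
  induction D with
  | zero => exact dif_pos τ.2
  | succ D ih =>
    have h0 : τ.1 ≠ 0 := by rintro h; simpa [h] using τ.2.2
    have hp := sub_single_add_single (pivot_ne_zero h0)
    have hτ' : τ.1 - Finsupp.single (pivot τ.1 h0) 1 ∈ Od O D := by
      refine ⟨hO.2 _ τ.2.1 _ tsub_le_self, ?_⟩
      have := τ.2.2
      rw [← hp, tdeg_add, tdeg_single_one] at this
      omega
    rw [coordVec_succ h0]
    exact (congrArg _ (ih ⟨_, hτ'⟩)).trans (multMatrix_mulVec_single_of_mem _ _ τ hp)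

/-- The commutativity of the matrices makes the value of `coordVec` independent of the order
in which the variables of a term are peeled off. -/
lemma coordVec_succ_add_single (hC : MultMatricesCommute O g d₀)
    {D : ℕ} (hD : D + 1 ≤ d₀) (r : Fin (n + 1)) {m : Term n} (hm : tdeg m = D) :
    coordVec O g (D + 1) (m + Finsupp.single r 1) = multMatrix O g r D *ᵥ coordVec O g D m := by
  induction D using Nat.strong_induction_on generalizing m r with
  | _ D ih =>
  have h0 : m + Finsupp.single r 1 ≠ 0 := by
    intro h; simpa using congrArg tdeg h
  rw [coordVec_succ h0]
  have hpiv := pivot_ne_zero h0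
  generalize pivot (m + Finsupp.single r 1) h0 = p at hpiv ⊢
  by_cases hpr : p = r
  · rw [hpr, add_tsub_cancel_right]
  have hmp : m p ≠ 0 := by simpa [Finsupp.single_apply, Ne.symm hpr] using hpiv
  obtain ⟨m', rfl⟩ : ∃ m', m = m' + Finsupp.single p 1 := ⟨_, (sub_single_add_single hmp).symm⟩
  obtain rfl : D = tdeg m' + 1 := by rw [← hm, tdeg_add, tdeg_single_one]
  rw [add_right_comm m', add_tsub_cancel_right, ih _ (by omega) (by omega) r rfl,
    ih _ (by omega) (by omega) p rfl, Matrix.mulVec_mulVec, Matrix.mulVec_mulVec,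
    hC _ (by omega) p r]

lemma coordMap_succ_X_mul (hC : MultMatricesCommute O g d₀)
    {D : ℕ} (hD : D + 1 ≤ d₀) (r : Fin (n + 1)) (f : MvPolynomial (Fin (n + 1)) K) :
    coordMap O g (D + 1) (X r * f) = multMatrix O g r D *ᵥ coordMap O g D f := by
  have h : coordMap O g (D + 1) ∘ₗ LinearMap.mulLeft K (X r)
      = (multMatrix O g r D).mulVecLin ∘ₗ coordMap O g D := by
    refine (basisMonomials (Fin (n + 1)) K).ext fun m => ?_
    simp only [LinearMap.comp_apply, LinearMap.mulLeft_apply, Matrix.mulVecLin_apply,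
      coe_basisMonomials, X_mul_monomial, coordMap_monomial, one_smul]
    by_cases hm : tdeg m = D
    · exact coordVec_succ_add_single hC hD r hm
    · rw [coordVec_of_tdeg_ne hm, coordVec_of_tdeg_ne (by simpa using hm), Matrix.mulVec_zero]
  exact LinearMap.congr_fun h f

lemma coordMap_zero_X_mul (r : Fin (n + 1)) (f : MvPolynomial (Fin (n + 1)) K) :
    coordMap O g 0 (X r * f) = 0 := by
  have h : coordMap O g 0 ∘ₗ LinearMap.mulLeft K (X r) = 0 :=
    (basisMonomials (Fin (n + 1)) K).ext fun m => by
      simp [X_mul_monomial, coordMap_monomial, coordVec_of_tdeg_ne]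
  exact LinearMap.congr_fun h f

lemma coordMap_X_mul_eq_zero (hC : MultMatricesCommute O g d₀)
    {f : MvPolynomial (Fin (n + 1)) K} (hf : ∀ D ≤ d₀, coordMap O g D f = 0) (r : Fin (n + 1)) :
    ∀ D ≤ d₀, coordMap O g D (X r * f) = 0
  | 0, _ => coordMap_zero_X_mul r f
  | D + 1, hD => by rw [coordMap_succ_X_mul hC hD, hf D (by omega), Matrix.mulVec_zero]

lemma coordMap_ofCoeffs (hO : IsOrderIdeal O) {D : ℕ} (v : OdSub O D → K) :
    coordMap O g D (ofCoeffs O D v) = v := by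
  have h : coordMap O g D ∘ₗ ofCoeffs O D = LinearMap.id :=
    (Pi.basisFun K _).ext fun τ => by
      simp [ofCoeffs_single, coordMap_monomial, coordVec_of_mem hO τ]
  exact LinearMap.congr_fun h v

lemma coordMap_eq_zero_of_isHomogeneous {f : MvPolynomial (Fin (n + 1)) K} {e D : ℕ}
    (hf : f.IsHomogeneous e) (he : e ≠ D) : coordMap O g D f = 0 := by
  rw [f.as_sum, map_sum]
  refine Finset.sum_eq_zero fun m hm => ?_
  have hdeg : tdeg m = e := by
    rw [tdeg_eq_degree, Finsupp.degree_eq_weight_one]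
    exact hf (mem_support_iff.mp hm)
  rw [coordMap_monomial, coordVec_of_tdeg_ne (hdeg ▸ he), smul_zero]

lemma coordMap_g_eq_zero (hO : IsOrderIdeal O) (hg : IsPrebasis O g)
    (hC : MultMatricesCommute O g d₀)
    {σ : Term n} (hσ : σ ∈ border O) {D : ℕ} (hD : D ≤ d₀) : coordMap O g D (g σ) = 0 := by
  by_cases hσD : tdeg σ = D
  swap
  · exact coordMap_eq_zero_of_isHomogeneous (hg.isHomogeneous hσ) hσD
  obtain ⟨hσO, r, τ, hτ, rfl⟩ := hσ
  subst hσD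
  let τ' : OdSub O (tdeg τ) := ⟨τ, hτ, rfl⟩
  have hgσ : g (τ + Finsupp.single r 1)
      = monomial (τ + Finsupp.single r 1) 1
        - ofCoeffs O (tdeg τ + 1) (fun τ'' => multMatrix O g r (tdeg τ) τ'' τ') := by
    rw [ofCoeffs_col_of_notMem hg r τ' hσO, sub_sub_cancel]
  rw [tdeg_add, tdeg_single_one] at hD ⊢
  rw [hgσ, map_sub, coordMap_monomial, one_smul, coordVec_succ_add_single hC hD r rfl,
    coordVec_of_mem hO τ', coordMap_ofCoeffs hO, Matrix.mulVec_single_one]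
  exact sub_self _

theorem coordMap_eq_zero_of_mem_idealG (hO : IsOrderIdeal O) (hg : IsPrebasis O g)
    (hC : MultMatricesCommute O g d₀)
    {f : MvPolynomial (Fin (n + 1)) K} (hf : f ∈ idealG O g) :
    ∀ D ≤ d₀, coordMap O g D f = 0 := by
  let N : Submodule K (MvPolynomial (Fin (n + 1)) K) :=
    ⨅ (D) (_ : D ≤ d₀), LinearMap.ker (coordMap O g D)
  have hN : ∀ f, f ∈ N ↔ ∀ D ≤ d₀, coordMap O g D f = 0 := by
    simp [N, Submodule.mem_iInf]
  refine (hN f).mp (restrictScalars_span_le_of_X_mul_mem (fun r f hf => ?_) ?_ hf)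
  · exact (hN _).mpr (coordMap_X_mul_eq_zero hC ((hN f).mp hf) r)
  · rintro _ ⟨σ, hσ, rfl⟩
    exact (hN _).mpr fun D hD => coordMap_g_eq_zero hO hg hC hσ hD

theorem disjoint_degPart_spanTerms_of_comm (hO : IsOrderIdeal O) (hg : IsPrebasis O g)
    (hC : MultMatricesCommute O g d₀)
    {D : ℕ} (hD : D ≤ d₀) : Disjoint (degPart (idealG O g) D) (spanTerms K (Od O D)) := by
  refine Submodule.disjoint_def.mpr fun f hfI hfO => ?_
  rw [← range_ofCoeffs] at hfO
  obtain ⟨v, rfl⟩ := hfO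
  rw [← coordMap_ofCoeffs (g := g) hO v, coordMap_eq_zero_of_mem_idealG hO hg hC hfI.1 D hD,
    map_zero]

end Coordinates

theorem comm_matrices_up_to_general (O : Set (Term n)) (hO : IsOrderIdeal O)
    (g : Term n → MvPolynomial (Fin (n + 1)) K) (hg : IsPrebasis O g)
    (d₀ : ℕ) (hd₀ : 2 ≤ d₀) :
    ((∀ d ≤ d₀,
        degPart (idealG O g) d ⊔ spanTerms K (Od O d) =
          homogeneousSubmodule (Fin (n + 1)) K d ∧
        Disjoint (degPart (idealG O g) d) (spanTerms K (Od O d))) ↔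
      (∀ d ≤ d₀ - 2, ∀ r s : Fin (n + 1),
        multMatrix O g r (d + 1) * multMatrix O g s d =
          multMatrix O g s (d + 1) * multMatrix O g r d)) ∧
    ((∀ d ≤ d₀,
        degPart (idealG O g) d ⊔ spanTerms K (Od O d) =
          homogeneousSubmodule (Fin (n + 1)) K d ∧
        Disjoint (degPart (idealG O g) d) (spanTerms K (Od O d))) →
      ∀ d ≤ d₀ - 1, ∀ r : Fin (n + 1), ∀ τ : OdSub O d,
        monomial (τ.1 + Finsupp.single r 1) (1 : K) -
          ∑ τ' : OdSub O (d + 1), multMatrix O g r d τ' τ • monomial τ'.1 (1 : K) ∈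
            idealG O g) := by
  refine ⟨⟨fun hB d hd r s => ?_, fun hC d hd => ⟨?_, ?_⟩⟩, fun _ d _ r τ => ?_⟩
  · exact multMatrix_comm_of_disjoint hg (hB (d + 1 + 1) (by omega)).2 r s
  · exact degPart_sup_spanTerms hO hg d
  · exact disjoint_degPart_spanTerms_of_comm hO hg (fun d hd => hC d (by omega)) hd
  · exact monomial_sub_ofCoeffs_col_mem hg r τ

/-- **Commutativity of formal multiplication matrices up to a given degree.** For `d₀ ≥ 2`:
the residue classes of `𝒪_d` form a basis of `P_d/(G)_d` for all `d ≤ d₀` iff the graded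
formal multiplication matrices commute, `Χ_r^{(d+1)}Χ_s^{(d)} = Χ_s^{(d+1)}Χ_r^{(d)}`, for
all `d ≤ d₀ - 2`; in that case, for `d ≤ d₀ - 1` the matrices represent multiplication by
`x_r` from `P_d/(G)_d` to `P_{d+1}/(G)_{d+1}` in the bases given by `𝒪_d` and `𝒪_{d+1}`. -/
theorem comm_matrices_up_to (O : Set (Term n)) (hO : IsOrderIdeal O) (hinf : O.Infinite)
    (g : Term n → MvPolynomial (Fin (n + 1)) K) (hg : IsPrebasis O g)
    (d₀ : ℕ) (hd₀ : 2 ≤ d₀) :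
    ((∀ d ≤ d₀,
        degPart (idealG O g) d ⊔ spanTerms K (Od O d) =
          homogeneousSubmodule (Fin (n + 1)) K d ∧
        Disjoint (degPart (idealG O g) d) (spanTerms K (Od O d))) ↔
      (∀ d ≤ d₀ - 2, ∀ r s : Fin (n + 1),
        multMatrix O g r (d + 1) * multMatrix O g s d =
          multMatrix O g s (d + 1) * multMatrix O g r d)) ∧
    ((∀ d ≤ d₀,
        degPart (idealG O g) d ⊔ spanTerms K (Od O d) =
          homogeneousSubmodule (Fin (n + 1)) K d ∧
        Disjoint (degPart (idealG O g) d) (spanTerms K (Od O d))) →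
      ∀ d ≤ d₀ - 1, ∀ r : Fin (n + 1), ∀ τ : OdSub O d,
        monomial (τ.1 + Finsupp.single r 1) (1 : K) -
          ∑ τ' : OdSub O (d + 1), multMatrix O g r d τ' τ • monomial τ'.1 (1 : K) ∈
            idealG O g) :=
  comm_matrices_up_to_general O hO g hg d₀ hd₀

end Border
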